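/- If a finite set X of linear λ-terms is duplicable, then every term in X is closed. -/

import Mathlib

/-!
Core development: untyped λ-terms in de Bruijn representation, linearity,
β- and η-reduction, as in the paper "A type-assignment of linear erasure
and duplication" (Curzi, Roversi).
-/

namespace LEMPaper

/-- Untyped λ-terms, de Bruijn representation. -/
inductive Lam : Type
  | var : ℕ → Lam
  | app : Lam → Lam → Lam
  | lam : Lam → Lam
  deriving DecidableEq

namespace Lam

/-- Lift a renaming under a binder. -/
def liftRen (ρ : ℕ → ℕ) : ℕ → ℕ
  | 0 => 0
  | n + 1 => ρ n + 1

/-- Apply a renaming of free variables. -/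
def rename (ρ : ℕ → ℕ) : Lam → Lam
  | var n => var (ρ n)
  | app M N => app (M.rename ρ) (N.rename ρ)
  | lam M => lam (M.rename (liftRen ρ))

/-- Shift all free variables up by one. -/
def shift (M : Lam) : Lam := M.rename Nat.succ

/-- Lift a simultaneous substitution under a binder. -/
def liftSub (s : ℕ → Lam) : ℕ → Lam
  | 0 => var 0
  | n + 1 => (s n).shift

/-- Simultaneous (capture-avoiding) substitution. -/
def substAll (s : ℕ → Lam) : Lam → Lam
  | var n => s n
  | app M N => app (M.substAll s) (N.substAll s)
  | lam M => lam (M.substAll (liftSub s))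

/-- Capture-avoiding substitution `M[N/n]`; the variables above `n` are decremented. -/
def subst (M : Lam) (n : ℕ) (N : Lam) : Lam :=
  M.substAll (fun m => if m < n then var m else if m = n then N else var (m - 1))

/-- Number of (free) occurrences of the variable `n` in a term. -/
def countFree : Lam → ℕ → ℕ
  | var m, n => if m = n then 1 else 0
  | app M N, n => M.countFree n + N.countFree n
  | lam M, n => M.countFree (n + 1)

/-- A term is closed when it has no free variables. -/
def Closed (M : Lam) : Prop := ∀ n, M.countFree n = 0

/-- A λ-term is linear if all of its free variables occur exactly once in it and
every abstraction binds a variable occurring exactly once in its (linear) body. -/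
def Linear : Lam → Prop
  | var _ => True
  | app M N => M.Linear ∧ N.Linear ∧ ∀ n, M.countFree n = 0 ∨ N.countFree n = 0
  | lam M => M.Linear ∧ M.countFree 0 = 1

/-- The identity combinator `I = λx.x`. -/
def I : Lam := lam (var 0)

/-- The linear pairing `⟨M,N⟩ = λz. z M N`. -/
def pair (M N : Lam) : Lam := lam (app (app (var 0) M.shift) N.shift)

/-- The size (number of nodes of the syntax tree) of a term. -/
def size : Lam → ℕ
  | var _ => 1
  | app M N => M.size + N.size + 1
  | lam M => M.size + 1

/-- One-step β-reduction, closed under arbitrary contexts. -/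
inductive Beta : Lam → Lam → Prop
  | beta (M N : Lam) : Beta (app (lam M) N) (M.subst 0 N)
  | appL {M M'} (N : Lam) : Beta M M' → Beta (app M N) (app M' N)
  | appR (M : Lam) {N N'} : Beta N N' → Beta (app M N) (app M N')
  | lam {M M'} : Beta M M' → Beta (lam M) (lam M')

/-- One-step η-reduction `λx.Mx →η M` (x not free in M), closed under contexts. -/
inductive Eta : Lam → Lam → Prop
  | eta (M : Lam) : Eta (lam (app M.shift (var 0))) M
  | appL {M M'} (N : Lam) : Eta M M' → Eta (app M N) (app M' N)
  | appR (M : Lam) {N N'} : Eta N N' → Eta (app M N) (app M N')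
  | lam {M M'} : Eta M M' → Eta (lam M) (lam M')

/-- One-step βη-reduction. -/
def BetaEta (M N : Lam) : Prop := Beta M N ∨ Eta M N

/-- A value is a closed linear λ-term in β-normal form. -/
def IsValue (V : Lam) : Prop := V.Linear ∧ V.Closed ∧ ∀ W, ¬ Beta V W

end Lam

end LEMPaper

namespace LEMPaper

/-- A set `X` of linear λ-terms is *duplicable* if there is a linear λ-term `D`
(a duplicator of `X`) such that `D M →βη* ⟨M,M⟩` and `FV(D) ∩ FV(M) = ∅`,
for every `M ∈ X`. -/
def Duplicable (X : Set Lam) : Prop :=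
  ∃ D : Lam, D.Linear ∧ ∀ M ∈ X,
    Relation.ReflTransGen Lam.BetaEta (Lam.app D M) (Lam.pair M M) ∧
    ∀ n, D.countFree n = 0 ∨ M.countFree n = 0

/-!
On linear terms, βη-reduction preserves the number of free occurrences of every variable:
a β-redex `(λx.P) Q` substitutes `Q` for the unique occurrence of `x` in `P`, and an η-redex
discards no subterm. Hence if `D M →βη* ⟨M,M⟩`, each variable occurs as often in `D M` as in
`⟨M,M⟩`, i.e. `#D(x) + #M(x) = 2 #M(x)`; as `D` and `M` share no free variables, `#M(x) = 0`.
-/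

namespace Lam

theorem liftRen_injective {ρ : ℕ → ℕ} (hρ : Function.Injective ρ) :
    Function.Injective (liftRen ρ) := by
  rintro (_ | a) (_ | b) hab <;> simp_all [liftRen, hρ.eq_iff]

theorem countFree_rename_apply {ρ : ℕ → ℕ} (hρ : Function.Injective ρ) (M : Lam) (m : ℕ) :
    (M.rename ρ).countFree (ρ m) = M.countFree m := by
  induction M generalizing ρ m with
  | var n => simp [rename, countFree, hρ.eq_iff]
  | app P Q ihP ihQ => simp [rename, countFree, ihP hρ, ihQ hρ]
  | lam P ih => simpa [rename, countFree, liftRen] using ih (liftRen_injective hρ) (m + 1)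

theorem countFree_rename_of_notMem_range {ρ : ℕ → ℕ} {n : ℕ} (hn : n ∉ Set.range ρ) (M : Lam) :
    (M.rename ρ).countFree n = 0 := by
  induction M generalizing ρ n with
  | var k => simpa [rename, countFree] using fun h => hn ⟨k, h⟩
  | app P Q ihP ihQ => simp [rename, countFree, ihP hn, ihQ hn]
  | lam P ih =>
    refine ih (fun ⟨m, hm⟩ => hn ⟨m - 1, ?_⟩)
    cases m <;> simp_all [liftRen]

theorem linear_rename_iff {ρ : ℕ → ℕ} (hρ : Function.Injective ρ) (M : Lam) :
    (M.rename ρ).Linear ↔ M.Linear := by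
  induction M generalizing ρ with
  | var m => simp [rename, Linear]
  | app P Q ihP ihQ =>
    simp only [rename, Linear, ihP hρ, ihQ hρ, and_congr_right_iff]
    refine fun _ _ => ⟨fun h n => ?_, fun h n => ?_⟩
    · simpa only [countFree_rename_apply hρ] using h (ρ n)
    · by_cases hn : n ∈ Set.range ρ
      · obtain ⟨m, rfl⟩ := hn
        simpa only [countFree_rename_apply hρ] using h m
      · exact .inl (countFree_rename_of_notMem_range hn P)
  | lam P ih =>
    simp only [rename, Linear, ih (liftRen_injective hρ)]
    rw [← countFree_rename_apply (liftRen_injective hρ) P 0, liftRen]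

theorem countFree_shift_succ (M : Lam) (n : ℕ) : M.shift.countFree (n + 1) = M.countFree n :=
  countFree_rename_apply Nat.succ_injective M n

theorem countFree_shift_zero (M : Lam) : M.shift.countFree 0 = 0 :=
  countFree_rename_of_notMem_range (by simp) M

theorem linear_shift_iff (M : Lam) : M.shift.Linear ↔ M.Linear :=
  linear_rename_iff Nat.succ_injective M

theorem subst_lam (M : Lam) (k : ℕ) (N : Lam) :
    (lam M).subst k N = lam (M.subst (k + 1) N.shift) := by
  simp only [subst, substAll]
  congr 2
  funext m
  rcases m with _ | m
  · simp [liftSub]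
  · simp only [liftSub]
    split_ifs <;> simp_all [shift, rename] <;> omega

theorem subst_app (P Q : Lam) (k : ℕ) (N : Lam) :
    (app P Q).subst k N = app (P.subst k N) (Q.subst k N) :=
  rfl

-- Variable `n` of `M.subst k N` comes from variable `if n < k then n else n + 1` of `M`
-- or from variable `n` of the copies of `N` placed at the occurrences of `k`.
theorem countFree_subst (M : Lam) (k : ℕ) (N : Lam) (n : ℕ) :
    (M.subst k N).countFree n =
      M.countFree (if n < k then n else n + 1) + M.countFree k * N.countFree n := by
  induction M generalizing k N n with
  | var m =>
    simp only [subst, substAll]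
    split_ifs <;> simp only [countFree] <;> split_ifs <;> omega
  | app P Q ihP ihQ =>
    rw [subst_app, countFree, countFree, countFree, ihP, ihQ]
    ring
  | lam P ih =>
    rw [subst_lam, countFree, countFree, countFree, ih, countFree_shift_succ]
    split_ifs <;> omega

theorem linear_subst {M N : Lam} {k : ℕ} (hM : M.Linear) (hN : N.Linear)
    (hdisj : ∀ n, M.countFree (if n < k then n else n + 1) = 0 ∨ N.countFree n = 0) :
    (M.subst k N).Linear := by
  induction M generalizing k N with
  | var m =>
    simp only [subst, substAll]
    split_ifs <;> trivial
  | app P Q ihP ihQ =>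
    obtain ⟨hP, hQ, hPQ⟩ := hM
    simp only [countFree, Nat.add_eq_zero_iff] at hdisj
    rw [subst_app]
    refine ⟨ihP hP hN fun n => (hdisj n).imp_left And.left,
      ihQ hQ hN fun n => (hdisj n).imp_left And.right, fun n => ?_⟩
    rw [countFree_subst, countFree_subst]
    rcases hdisj n with ⟨hPn, hQn⟩ | hNn
    · rcases hPQ k with hPk | hQk
      · exact .inl (by simp [hPn, hPk])
      · exact .inr (by simp [hQn, hQk])
    · simpa [hNn] using hPQ _
  | lam P ih =>
    obtain ⟨hP, hP0⟩ := hM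
    simp only [countFree] at hdisj
    rw [subst_lam]
    refine ⟨ih hP ((linear_shift_iff N).2 hN) fun n => ?_, ?_⟩
    · rcases n with _ | n
      · exact .inr (countFree_shift_zero N)
      · rw [countFree_shift_succ]
        convert hdisj n using 3
        split_ifs <;> omega
    · simp [countFree_subst, countFree_shift_zero, hP0]

theorem countFree_pair (M N : Lam) (n : ℕ) :
    (pair M N).countFree n = M.countFree n + N.countFree n := by
  simp [pair, countFree, countFree_shift_succ]

def PreservesLinearity (M N : Lam) : Prop :=
  M.Linear → N.Linear ∧ N.countFree = M.countFree

namespace PreservesLinearity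

variable {M M' N : Lam}

theorem trans (h : PreservesLinearity M M') (h' : PreservesLinearity M' N) :
    PreservesLinearity M N := fun hM =>
  let ⟨hM', hcount⟩ := h hM
  let ⟨hN, hcount'⟩ := h' hM'
  ⟨hN, hcount'.trans hcount⟩

theorem app_left (h : PreservesLinearity M M') (P : Lam) :
    PreservesLinearity (app M P) (app M' P) := by
  rintro ⟨hM, hP, hdisj⟩
  obtain ⟨hM', hcount⟩ := h hM
  exact ⟨⟨hM', hP, hcount ▸ hdisj⟩, funext fun n => by simp only [countFree, hcount]⟩

theorem app_right (h : PreservesLinearity M M') (P : Lam) :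
    PreservesLinearity (app P M) (app P M') := by
  rintro ⟨hP, hM, hdisj⟩
  obtain ⟨hM', hcount⟩ := h hM
  exact ⟨⟨hP, hM', hcount ▸ hdisj⟩, funext fun n => by simp only [countFree, hcount]⟩

theorem lam (h : PreservesLinearity M M') : PreservesLinearity (lam M) (lam M') := by
  rintro ⟨hM, hM0⟩
  obtain ⟨hM', hcount⟩ := h hM
  exact ⟨⟨hM', hcount ▸ hM0⟩, funext fun n => by simp only [countFree, hcount]⟩

end PreservesLinearity

theorem Beta.preservesLinearity {M N : Lam} (h : Beta M N) : PreservesLinearity M N := by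
  induction h with
  | beta P Q =>
    rintro ⟨⟨hP, hP0⟩, hQ, hdisj⟩
    refine ⟨linear_subst hP hQ (by simpa [countFree] using hdisj), funext fun n => ?_⟩
    simp [countFree_subst, countFree, hP0]
  | appL N _ ih => exact ih.app_left N
  | appR M _ ih => exact ih.app_right M
  | lam _ ih => exact ih.lam

theorem Eta.preservesLinearity {M N : Lam} (h : Eta M N) : PreservesLinearity M N := by
  induction h with
  | eta P =>
    rintro ⟨⟨hP, -⟩, -⟩
    exact ⟨(linear_shift_iff P).1 hP, funext fun n => by simp [countFree, countFree_shift_succ]⟩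
  | appL N _ ih => exact ih.app_left N
  | appR M _ ih => exact ih.app_right M
  | lam _ ih => exact ih.lam

theorem BetaEta.preservesLinearity {M N : Lam} (h : BetaEta M N) : PreservesLinearity M N :=
  h.elim Beta.preservesLinearity Eta.preservesLinearity

theorem preservesLinearity_of_reflTransGen {M N : Lam}
    (h : Relation.ReflTransGen BetaEta M N) : PreservesLinearity M N := by
  induction h with
  | refl => exact fun hM => ⟨hM, rfl⟩
  | tail _ hstep ih => exact ih.trans hstep.preservesLinearity

theorem closed_of_app_reduces_to_pair {D M : Lam} (hD : D.Linear) (hM : M.Linear)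
    (hdisj : ∀ n, D.countFree n = 0 ∨ M.countFree n = 0)
    (hred : Relation.ReflTransGen BetaEta (app D M) (pair M M)) : M.Closed := by
  intro n
  have hcount := congrFun (preservesLinearity_of_reflTransGen hred ⟨hD, hM, hdisj⟩).2 n
  rw [countFree_pair, countFree] at hcount
  have := hdisj n
  omega

end Lam

theorem duplicable_implies_all_closed_general
    (X : Set Lam) (hlin : ∀ M ∈ X, Lam.Linear M)
    (hdup : Duplicable X) :
    ∀ M ∈ X, Lam.Closed M := by
  obtain ⟨D, hD, hdupD⟩ := hdup
  intro M hMX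
  obtain ⟨hred, hdisj⟩ := hdupD M hMX
  exact Lam.closed_of_app_reduces_to_pair hD (hlin M hMX) hdisj hred

/-- Proposition 2.2: if a finite set of linear λ-terms is
duplicable then all of its elements are closed. -/
theorem duplicable_implies_all_closed
    (X : Set Lam) (hfin : X.Finite) (hlin : ∀ M ∈ X, Lam.Linear M)
    (hdup : Duplicable X) :
    ∀ M ∈ X, Lam.Closed M :=
  duplicable_implies_all_closed_general X hlin hdup

end LEMPaper
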